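/- Let N ≥ 1, let b be a nonzero real number, and let n : {1,…,N} → ℕ be a multi-index with total degree ∑_{j=1}^N (2n_j + 1) ≥ 2. Define the entire function F : ℂ^N → ℂ by F(z) = exp(−i·b·∏_{j=1}^N z_j^{2n_j+1}). Then F violates every Paley–Wiener bound: for all constants C > 0, M ≥ 0 and L ≥ 0 there exists z ∈ ℂ^N such that |F(z)| > C·(1 + ‖z‖)^M · exp(L·∑_{j=1}^N |Im z_j|). (Consequently, the inverse Fourier transform of k ↦ exp(−i·b·k^{2n+1}) cannot be a distribution of compact support.) -/

import Mathlib

open Complex Filter Finset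

/-! Choose `w ∈ ℂ^N` with `∏ w_j^{2n_j+1} = i b`. By homogeneity of the product, along the real
ray `z = s w` the exponent `-i b ∏ z_j^{2n_j+1}` equals `b² s^D` with `D = ∑ (2n_j+1) ≥ 2`, so
`|F(s w)| = exp (b² s^D)`, while the Paley–Wiener majorant grows only like `exp (O(s))`. -/

theorem Finset.prod_mul_pow_eq_pow_sum_mul {ι M : Type*} [CommMonoid M] (s : Finset ι)
    (a : M) (w : ι → M) (d : ι → ℕ) :
    ∏ i ∈ s, (a * w i) ^ d i = a ^ (∑ i ∈ s, d i) * ∏ i ∈ s, w i ^ d i := by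
  simp only [mul_pow, prod_mul_distrib, prod_pow_eq_pow_sum]

theorem IsAlgClosed.exists_prod_pow_eq {ι k : Type*} [Fintype ι] [Field k] [IsAlgClosed k]
    (d : ι → ℕ) (hd : ∑ i, d i ≠ 0) (c : k) : ∃ w : ι → k, ∏ i, w i ^ d i = c := by
  classical
  obtain ⟨i₀, -, hi₀⟩ := exists_ne_zero_of_sum_ne_zero hd
  obtain ⟨r, hr⟩ := IsAlgClosed.exists_pow_nat_eq c (Nat.pos_of_ne_zero hi₀)
  refine ⟨fun i => if i = i₀ then r else 1, ?_⟩
  simp [ite_pow, hr]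

theorem tendsto_mul_pow_sub_mul_atTop {c : ℝ} (hc : 0 < c) {D : ℕ} (hD : 2 ≤ D) (K : ℝ) :
    Tendsto (fun s : ℝ => c * s ^ D - K * s) atTop atTop := by
  obtain ⟨k, rfl⟩ := Nat.exists_eq_add_of_le' hD
  have h : Tendsto (fun s : ℝ => c * s ^ (k + 1) + -K) atTop atTop :=
    tendsto_atTop_add_const_right _ _ ((tendsto_pow_atTop k.succ_ne_zero).const_mul_atTop hc)
  exact (tendsto_id.atTop_mul_atTop₀ h).congr fun s => by simp only [id]; ring

theorem eventually_mul_rpow_mul_exp_lt_exp {c : ℝ} (hc : 0 < c) {D : ℕ} (hD : 2 ≤ D)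
    (C : ℝ) {M a : ℝ} (hM : 0 ≤ M) (ha : 0 ≤ a) (L : ℝ) :
    ∀ᶠ s in atTop, C * (1 + a * s) ^ M * Real.exp (L * s) < Real.exp (c * s ^ D) := by
  filter_upwards [(tendsto_mul_pow_sub_mul_atTop hc hD (M * a + L)).eventually_gt_atTop C,
    eventually_ge_atTop 0] with s hs hs0
  have hpow : (1 + a * s) ^ M ≤ Real.exp (M * a * s) := by
    calc (1 + a * s) ^ M ≤ Real.exp (a * s) ^ M :=
          Real.rpow_le_rpow (by positivity) (by linarith [Real.add_one_le_exp (a * s)]) hM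
      _ = Real.exp (M * a * s) := by rw [← Real.exp_mul]; ring_nf
  calc C * (1 + a * s) ^ M * Real.exp (L * s)
      ≤ Real.exp C * Real.exp (M * a * s) * Real.exp (L * s) := by
        gcongr
        linarith [Real.add_one_le_exp C]
    _ = Real.exp (C + (M * a + L) * s) := by rw [← Real.exp_add, ← Real.exp_add]; ring_nf
    _ < Real.exp (c * s ^ D) := Real.exp_lt_exp.mpr (by linarith)

theorem stmt_5 (N : ℕ) (b : ℝ) (hb : b ≠ 0)
    (n : Fin N → ℕ) (hdeg : 2 ≤ ∑ j : Fin N, (2 * n j + 1)) :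
    ∀ C M L : ℝ, 0 < C → 0 ≤ M → 0 ≤ L →
      ∃ z : EuclideanSpace ℂ (Fin N),
        ‖Complex.exp (-(Complex.I * (b : ℂ)) *
            ∏ j : Fin N, z j ^ (2 * n j + 1))‖ >
          C * (1 + ‖z‖) ^ M * Real.exp (L * ∑ j : Fin N, |(z j).im|) := by
  intro C M L _ hM _
  obtain ⟨w, hw⟩ := IsAlgClosed.exists_prod_pow_eq (fun j => 2 * n j + 1) (by omega) (I * b)
  obtain ⟨s, hs, hs0⟩ := ((eventually_mul_rpow_mul_exp_lt_exp (sq_pos_of_ne_zero hb) hdeg C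
    hM (norm_nonneg (WithLp.toLp 2 w)) (L * ∑ j, |(w j).im|)).and (eventually_ge_atTop 0)).exists
  refine ⟨(s : ℂ) • WithLp.toLp 2 w, ?_⟩
  have hexp : -(I * b) * ∏ j, ((s : ℂ) • WithLp.toLp 2 w) j ^ (2 * n j + 1)
      = ((b ^ 2 * s ^ ∑ j, (2 * n j + 1) : ℝ) : ℂ) := by
    simp only [PiLp.smul_apply, smul_eq_mul, prod_mul_pow_eq_pow_sum_mul, hw]
    push_cast
    linear_combination (-(s : ℂ) ^ (∑ j, (2 * n j + 1)) * (b : ℂ) ^ 2) * I_sq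
  have hnorm : ‖(s : ℂ) • WithLp.toLp 2 w‖ = ‖WithLp.toLp 2 w‖ * s := by
    rw [norm_smul, norm_real, Real.norm_of_nonneg hs0, mul_comm]
  have him : ∑ j, |(((s : ℂ) • WithLp.toLp 2 w) j).im| = (∑ j, |(w j).im|) * s := by
    simp only [PiLp.smul_apply, smul_eq_mul, im_ofReal_mul, abs_mul, abs_of_nonneg hs0, sum_mul,
      mul_comm s]
  rw [hexp, norm_exp, ofReal_re, hnorm, him, ← mul_assoc]
  exact hs
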